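/- arXiv:math/0703262 — 6 statements merged into one kernel-verified Lean document; each statement's English description precedes it below -/
import Mathlib

section
/- For every n ≥ 1, the length of the list L_n equals the n-th Catalan number C_n. -/
def lastD (w : List Nat) : Nat := w.getLastD 0

/-- Shifted production for the Catalan rule:
`sC k 2 = [2, k+1, k, ..., 3]` and, for `3 ≤ i ≤ k+1`,
`sC k i = [i, i+1, ..., k+1, 2, 3, ..., i-1]`. -/
def sC (k i : Nat) : List Nat :=
  if i = 2 then 2 :: (List.range (k - 1)).map (fun t => k + 1 - t)
  else (List.range (k + 2 - i)).map (fun t => i + t) ++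
       (List.range (i - 2)).map (fun t => 2 + t)

/-- Builds the sublists `L_n^i` from the previous level, carrying the
starting digit of the next shifted production. -/
def graySubsAux : Nat → List (List Nat) → List (List (List Nat))
  | _, [] => []
  | j, w :: ws =>
    let sub := (sC (lastD w) j).map (fun d => w ++ [d])
    sub :: graySubsAux (lastD (sub.getLastD [])) ws

def graySubs (prev : List (List Nat)) : List (List (List Nat)) :=
  graySubsAux 2 prev

/-- The Gray code list `L_n` for the Catalan succession rule. -/
def grayL : Nat → List (List Nat)
  | 0 => []
  | 1 => [[2]]
  | n + 2 => (graySubs (grayL (n + 1))).flatten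

/-!
Each word of `L_n` with last digit `k ≥ 1` has exactly `k` children in `L_{n+1}`, whose last
digits are a permutation of `2, …, k+1`: `s(k, 2)` is `2` followed by `3, …, k+1` reversed,
`s(k, 3)` is `3, …, k+1, 2`, and the carried starting digit (the last digit of the previous
block) is always `2` or `3`. So the multiset of last digits evolves along the Catalan generating
tree `(k) ⇝ (2)(3)⋯(k+1)`, and `|L_n|` is the number of nodes `n` levels below a node `(1)`,
whose only child is `(2)`. These counts satisfy a Pascal-type recurrence solved by ballot
numbers, and the one for `(1)` is `C(2n, n) - C(2n, n+1) = C_n`.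
-/

theorem sC_succ_two (m : ℕ) : sC (m + 1) 2 = 2 :: (List.range' 3 m).reverse := by
  simp only [sC, if_true, List.reverse_range', Nat.add_sub_cancel]
  congr 1
  exact List.map_congr_left fun t _ => by omega

theorem sC_succ_three (m : ℕ) : sC (m + 1) 3 = List.range' 3 m ++ [2] := by
  simp [sC, List.range'_eq_map_range, show m + 1 + 2 - 3 = m by omega]

open List in
theorem sC_perm_range' {k j : ℕ} (hk : 0 < k) (hj : j = 2 ∨ j = 3) :
    sC k j ~ range' 2 k := by
  obtain ⟨m, rfl⟩ := Nat.exists_eq_add_one.mpr hk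
  rcases hj with rfl | rfl
  · rw [sC_succ_two, range'_succ]
    exact (reverse_perm _).cons 2
  · rw [sC_succ_three, range'_succ]
    exact perm_append_singleton _ _

theorem sC_getLastD {k j : ℕ} (hk : 0 < k) (hj : j = 2 ∨ j = 3) :
    (sC k j).getLastD 0 = 2 ∨ (sC k j).getLastD 0 = 3 := by
  obtain ⟨m, rfl⟩ := Nat.exists_eq_add_one.mpr hk
  rcases hj with rfl | rfl
  · rcases m with _ | m
    · simp [sC_succ_two]
    · right
      rw [sC_succ_two, List.range'_succ, List.reverse_cons, List.getLastD_cons, List.getLastD_concat]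
  · simp [sC_succ_three]

theorem lastD_getLastD_map_append (w l : List ℕ) :
    lastD ((l.map (fun d => w ++ [d])).getLastD []) = l.getLastD 0 := by
  rcases List.eq_nil_or_concat l with rfl | ⟨l, b, rfl⟩
  · rfl
  · simp [lastD]

open List in
theorem map_lastD_flatten_graySubsAux_perm {j : ℕ} (hj : j = 2 ∨ j = 3) {ws : List (List ℕ)}
    (hws : ∀ w ∈ ws, 0 < lastD w) :
    (graySubsAux j ws).flatten.map lastD ~ (ws.map lastD).flatMap (range' 2 ·) := by
  induction ws generalizing j with
  | nil => simp [graySubsAux]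
  | cons w ws ih =>
    have hw : 0 < lastD w := hws w mem_cons_self
    simp only [graySubsAux, flatten_cons, map_append, map_cons, flatMap_cons]
    refine Perm.append ?_ (ih ?_ fun v hv => hws v (mem_cons_of_mem w hv))
    · simpa [lastD, Function.comp_def] using sC_perm_range' hw hj
    · rw [lastD_getLastD_map_append]
      exact sC_getLastD hw hj

theorem lastD_pos_of_mem_grayL {n : ℕ} {w : List ℕ} (hw : w ∈ grayL n) : 0 < lastD w := by
  induction n using Nat.strong_induction_on generalizing w with
  | _ n ih =>
  match n, hw with
  | 1, hw => simp_all [grayL, lastD]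
  | m + 2, hw =>
    have hmem := ((map_lastD_flatten_graySubsAux_perm (Or.inl rfl)
      fun v hv => ih (m + 1) (by omega) hv).mem_iff).mp (List.mem_map_of_mem hw)
    simp only [List.mem_flatMap, List.mem_range'] at hmem
    omega

open List in
theorem map_lastD_grayL_succ_perm {n : ℕ} (hn : 0 < n) :
    (grayL (n + 1)).map lastD ~ ((grayL n).map lastD).flatMap (List.range' 2 ·) := by
  obtain ⟨m, rfl⟩ := Nat.exists_eq_add_one.mpr hn
  exact map_lastD_flatten_graySubsAux_perm (Or.inl rfl) fun _ => lastD_pos_of_mem_grayL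

/-- The number of nodes `d` levels below a node labelled `k` in the tree `(k) ⇝ (2)(3)⋯(k+1)`. -/
def subtreeCount : ℕ → ℕ → ℕ
  | 0, _ => 1
  | d + 1, k => ((List.range' 2 k).map (subtreeCount d)).sum

theorem subtreeCount_succ_succ (d k : ℕ) :
    subtreeCount (d + 1) (k + 1) = subtreeCount (d + 1) k + subtreeCount d (k + 2) := by
  simp [subtreeCount, List.range'_1_concat, add_comm]

/-- The ballot number `C(2d+m, d) - C(2d+m, d-1)`, with `C(2d+m, d-1)` written as
`C(2d+m, d+m+1)` so that it also vanishes at `d = 0`. -/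
theorem subtreeCount_add_choose (d m : ℕ) :
    subtreeCount d (m + 1) + (2 * d + m).choose (d + m + 1) = (2 * d + m).choose d := by
  induction d generalizing m with
  | zero => simp [subtreeCount]
  | succ d ih =>
    -- the claim at `d + 1` with `m` shifted to `k = m + 1`, so that `k = 0` is a trivial base case
    have hshift : ∀ k, subtreeCount (d + 1) k + (2 * d + k + 1).choose (d + k + 1) =
        (2 * d + k + 1).choose (d + 1) := by
      intro k
      induction k with
      | zero => simp [subtreeCount]
      | succ k ihk =>
        have hprev := ih (k + 1)
        have pascal_top := Nat.choose_succ_succ' (2 * d + k + 1) (d + k + 1)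
        have pascal_bot := Nat.choose_succ_succ' (2 * d + k + 1) d
        rw [subtreeCount_succ_succ]
        ring_nf at hprev ihk pascal_top pascal_bot ⊢
        omega
    simpa [show 2 * (d + 1) + m = 2 * d + (m + 1) + 1 by omega, add_assoc, add_comm,
      add_left_comm] using hshift (m + 1)

theorem catalan_add_choose (n : ℕ) : catalan n + (2 * n).choose (n + 1) = (2 * n).choose n := by
  have hcat := succ_mul_catalan_eq_centralBinom n
  have hchoose := Nat.choose_succ_right_eq (2 * n) n
  rw [Nat.centralBinom_eq_two_mul_choose] at hcat
  rw [show 2 * n - n = n by omega] at hchoose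
  apply Nat.eq_of_mul_eq_mul_right (Nat.succ_pos n)
  nlinarith

theorem subtreeCount_one (n : ℕ) : subtreeCount n 1 = catalan n := by
  have h := subtreeCount_add_choose n 0
  simp only [add_zero, zero_add] at h
  have := catalan_add_choose n
  omega

theorem length_grayL_add (d : ℕ) {n : ℕ} (hn : 0 < n) :
    (grayL (n + d)).length = ((grayL n).map fun w => subtreeCount d (lastD w)).sum := by
  induction d generalizing n with
  | zero => simp [subtreeCount]
  | succ d ih =>
    have hperm := ((map_lastD_grayL_succ_perm hn).map (subtreeCount d)).sum_eq
    rw [← add_assoc, add_right_comm, ih (Nat.succ_pos n)]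
    simpa [List.flatMap, List.sum_flatten, subtreeCount, Function.comp_def] using hperm

/-- The list `L_n` has `C_n` (Catalan number) elements. -/
theorem stmt3 (n : Nat) (hn : 1 ≤ n) : (grayL n).length = catalan n := by
  obtain ⟨d, rfl⟩ := Nat.exists_eq_add_one.mpr hn
  calc (grayL (d + 1)).length = (grayL (1 + d)).length := by rw [Nat.add_comm]
    _ = subtreeCount (d + 1) 1 := by simp [length_grayL_add d one_pos, grayL, lastD, subtreeCount]
    _ = catalan (d + 1) := subtreeCount_one _
end

section
/- The list L_n contains no repeated words: all words of L_n are pairwise distinct. -/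
theorem sC_nodup (k i : Nat) : (sC k i).Nodup := by
  unfold sC
  split
  · refine List.Nodup.cons ?not_mem ?tail
    case not_mem =>
      simp only [List.mem_map, List.mem_range, not_exists, not_and]
      intro t ht
      omega
    case tail =>
      refine List.Nodup.map_on (fun a ha b hb hab => ?_) List.nodup_range
      simp only [List.mem_range] at ha hb
      omega
  · simp only [← List.range'_eq_map_range]
    refine (List.nodup_range' _).append (List.nodup_range' _) fun x hx hx' => ?_
    simp only [List.mem_range'_1] at hx hx'
    omega

theorem exists_eq_append_singleton_of_mem_flatten_graySubsAux {x : List Nat} {j : Nat}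
    {ws : List (List Nat)} (hx : x ∈ (graySubsAux j ws).flatten) :
    ∃ w ∈ ws, ∃ d, x = w ++ [d] := by
  induction ws generalizing j with
  | nil => simp [graySubsAux] at hx
  | cons w ws ih =>
    simp only [graySubsAux, List.flatten_cons, List.mem_append, List.mem_map] at hx
    rcases hx with ⟨d, -, rfl⟩ | hx
    · exact ⟨w, List.mem_cons_self, d, rfl⟩
    · obtain ⟨w', hw', d, rfl⟩ := ih hx
      exact ⟨w', List.mem_cons_of_mem w hw', d, rfl⟩

theorem nodup_flatten_graySubsAux (j : Nat) {ws : List (List Nat)} (hws : ws.Nodup) :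
    (graySubsAux j ws).flatten.Nodup := by
  induction ws generalizing j with
  | nil => simp [graySubsAux]
  | cons w ws ih =>
    rw [List.nodup_cons] at hws
    rw [graySubsAux, List.flatten_cons]
    refine List.Nodup.append ?head (ih _ hws.2) ?disjoint
    case head =>
      exact (sC_nodup _ _).map fun d d' h => List.singleton_inj.mp (List.append_cancel_left h)
    case disjoint =>
      intro x hx hx'
      obtain ⟨d, -, rfl⟩ := List.mem_map.mp hx
      obtain ⟨w', hw', d', hww'⟩ := exists_eq_append_singleton_of_mem_flatten_graySubsAux hx'
      obtain rfl := (List.append_inj' hww' rfl).1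
      exact hws.1 hw'

theorem stmt6_general (n : Nat) : (grayL n).Nodup := by
  induction n with
  | zero => simp [grayL]
  | succ n ih =>
    cases n with
    | zero => simp [grayL]
    | succ n => exact nodup_flatten_graySubsAux 2 ih

/-- The words of `L_n` are pairwise distinct. -/
theorem stmt6 (n : Nat) (hn : 1 ≤ n) : (grayL n).Nodup :=
  stmt6_general n
end

section
/- The number of words of length n over ℕ with first digit 2 and satisfying 2 ≤ w_{j+1} ≤ w_j + 1 for all 1 ≤ j < n equals the n-th Catalan number C_n = (1/(n+1))·binom(2n, n). -/
/-- `w` is a path from the root in the Catalan generating tree: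
`w₁ = 2` and `2 ≤ w_{j+1} ≤ w_j + 1`. -/
def isTreeWord (w : List Nat) : Prop :=
  w.head? = some 2 ∧ ∀ j, j + 1 < w.length →
    2 ≤ w.getD (j + 1) 0 ∧ w.getD (j + 1) 0 ≤ w.getD j 0 + 1

/-!
The root `(2)` is the only child of a virtual node `(1)`, so tree words are the paths hanging
below `(1)`. A path of length `n + 1` below `(1)` is `2` followed by a path of length `n` below
`(2)`. Cutting such a path just before its first label `2` splits it into a path whose labels
are all at least `3` — one below `(1)` with every label raised by one — and a path below `(1)`.
Hence the counts satisfy the Catalan recurrence `C_{n+1} = ∑_{i+j=n} C_i C_j`.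
-/

open List
open scoped Finset
open Finset.HasAntidiagonal (antidiagonal mem_antidiagonal)

namespace CatalanTree

/-- The succession rule `(k) ⇝ (2)(3)⋯(k+1)`. -/
def IsChild (k k' : ℕ) : Prop := 2 ≤ k' ∧ k' ≤ k + 1

/-- The words labelling the paths of length `n` that start below a node labelled `k`. -/
def paths : ℕ → ℕ → Finset (List ℕ)
  | _, 0 => {[]}
  | k, n + 1 => (Finset.Icc 2 (k + 1)).biUnion fun b => (paths b n).image (b :: ·)

theorem mem_paths {k n : ℕ} {w : List ℕ} :
    w ∈ paths k n ↔ w.length = n ∧ IsChain IsChild (k :: w) := by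
  induction n generalizing k w with
  | zero => cases w <;> simp [paths]
  | succ n ih =>
    cases w with
    | nil => simp [paths]
    | cons b t =>
      simp only [paths, Finset.mem_biUnion, Finset.mem_Icc, Finset.mem_image, ih, cons.injEq,
        length_cons, isChain_cons_cons, IsChild]
      grind

theorem isChild_one_iff {k : ℕ} : IsChild 1 k ↔ k = 2 := by
  simp only [IsChild]
  omega

theorem two_le_of_mem {k x : ℕ} {w : List ℕ} (h : IsChain IsChild (k :: w)) (hx : x ∈ w) :
    2 ≤ x := by
  induction w generalizing k with
  | nil => simp at hx
  | cons b t ih =>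
    rw [isChain_cons_cons] at h
    rcases mem_cons.1 hx with rfl | hx
    · exact h.1.1
    · exact ih h.2 hx

theorem isChain_map_add_one_iff {k : ℕ} {u : List ℕ} (hu : ∀ x ∈ u, 2 ≤ x) :
    IsChain IsChild ((k + 1) :: u.map (· + 1)) ↔ IsChain IsChild (k :: u) := by
  rw [show (k + 1) :: u.map (· + 1) = (k :: u).map (· + 1) from rfl, isChain_map]
  constructor <;> refine IsChain.imp_of_mem_tail_imp fun a b _ hb hab => ?_ <;>
    have := hu b hb <;> simp only [IsChild] at hab ⊢ <;> omega

/-- In a path below `(2)`, the first label `2` starts the second part; the labels before it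
are lowered by one. -/
def splitAtTwo (t : List ℕ) : List ℕ × List ℕ :=
  ((t.takeWhile (3 ≤ ·)).map (· - 1), t.dropWhile (3 ≤ ·))

theorem map_add_one_append_splitAtTwo (t : List ℕ) :
    (splitAtTwo t).1.map (· + 1) ++ (splitAtTwo t).2 = t := by
  have hpre : ∀ x ∈ t.takeWhile (3 ≤ ·), ((· + 1) ∘ (· - 1)) x = id x := fun x hx => by
    have : 3 ≤ x := by simpa using mem_takeWhile_imp hx
    simp only [Function.comp_apply, id_eq]
    omega
  rw [splitAtTwo, List.map_map, map_congr_left hpre, map_id, takeWhile_append_dropWhile]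

theorem splitAtTwo_map_add_one_append {u v : List ℕ} (hu : IsChain IsChild (1 :: u))
    (hv : IsChain IsChild (1 :: v)) : splitAtTwo (u.map (· + 1) ++ v) = (u, v) := by
  have hu' : ∀ x ∈ u.map (· + 1), decide (3 ≤ x) = true := by
    simp only [List.mem_map, decide_eq_true_eq, forall_exists_index, and_imp]
    rintro _ x hx rfl
    have := two_le_of_mem hu hx
    omega
  have hv' : ∀ y ∈ v.head?, y = 2 := fun y hy => isChild_one_iff.1 ((isChain_cons.1 hv).1 y hy)
  have htake : v.takeWhile (3 ≤ ·) = [] ∧ v.dropWhile (3 ≤ ·) = v := by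
    cases v with
    | nil => simp
    | cons b t => simp [hv' b rfl]
  simp [splitAtTwo, takeWhile_append_of_pos hu', dropWhile_append_of_pos hu', htake,
    List.map_map, Function.comp_def]

theorem isChain_splitAtTwo {t : List ℕ} (h : IsChain IsChild (2 :: t)) :
    IsChain IsChild (1 :: (splitAtTwo t).1) ∧ IsChain IsChild (1 :: (splitAtTwo t).2) := by
  rw [← map_add_one_append_splitAtTwo t, ← cons_append] at h
  have hfst : ∀ x ∈ (splitAtTwo t).1, 2 ≤ x := by
    simp only [splitAtTwo, List.mem_map, forall_exists_index, and_imp]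
    rintro _ x hx rfl
    have : 3 ≤ x := by simpa using mem_takeWhile_imp hx
    omega
  refine ⟨(isChain_map_add_one_iff hfst).1 h.left_of_append,
    isChain_cons.2 ⟨fun y hy => isChild_one_iff.2 ?_, h.right_of_append⟩⟩
  have h2 : 2 ≤ y := two_le_of_mem (k := 2) h (mem_append_right _ (mem_of_mem_head? hy))
  have h3 := head?_dropWhile_not (3 ≤ ·) t
  simp only [splitAtTwo] at hy
  rw [hy] at h3
  simp only [decide_eq_false_iff_not] at h3
  omega

theorem isChain_map_add_one_append {u v : List ℕ} (hu : IsChain IsChild (1 :: u))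
    (hv : IsChain IsChild (1 :: v)) : IsChain IsChild (2 :: (u.map (· + 1) ++ v)) := by
  rw [← cons_append]
  refine (isChain_map_add_one_iff fun x hx => two_le_of_mem hu hx).2 hu |>.append hv.tail ?_
  intro x hx y hy
  rw [isChild_one_iff.1 ((isChain_cons.1 hv).1 y hy)]
  have : x ∈ 2 :: u.map (· + 1) := mem_of_getLast? hx
  simp only [mem_cons, List.mem_map] at this
  constructor <;> omega

theorem card_paths_one_succ (n : ℕ) : #(paths 1 (n + 1)) = #(paths 2 n) := by
  rw [paths, Finset.Icc_self, Finset.singleton_biUnion,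
    Finset.card_image_of_injective _ cons_injective]

theorem card_paths_two (n : ℕ) :
    #(paths 2 n) = ∑ p ∈ antidiagonal n, #(paths 1 p.1) * #(paths 1 p.2) := by
  simp_rw [← Finset.card_product]
  rw [← Finset.card_sigma]
  refine Finset.card_nbij'
    (fun t => ⟨((splitAtTwo t).1.length, (splitAtTwo t).2.length), splitAtTwo t⟩)
    (fun x => x.2.1.map (· + 1) ++ x.2.2) (fun t ht => ?_) (fun x hx => ?_)
    (fun t _ => map_add_one_append_splitAtTwo t) (fun x hx => ?_)
  · rw [Finset.mem_coe, mem_paths] at ht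
    simp only [Finset.mem_coe, Finset.mem_sigma, mem_antidiagonal, Finset.mem_product, mem_paths,
      true_and]
    refine ⟨?_, isChain_splitAtTwo ht.2⟩
    rw [← ht.1, ← congrArg length (map_add_one_append_splitAtTwo t), length_append, length_map]
  · obtain ⟨⟨i, j⟩, u, v⟩ := x
    simp only [Finset.mem_coe, Finset.mem_sigma, mem_antidiagonal, Finset.mem_product,
      mem_paths] at hx ⊢
    obtain ⟨rfl, ⟨rfl, hu⟩, rfl, hv⟩ := hx
    exact ⟨by simp, isChain_map_add_one_append hu hv⟩
  · obtain ⟨⟨i, j⟩, u, v⟩ := x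
    simp only [Finset.mem_coe, Finset.mem_sigma, mem_antidiagonal, Finset.mem_product,
      mem_paths] at hx
    obtain ⟨-, ⟨rfl, hu⟩, rfl, hv⟩ := hx
    simp [splitAtTwo_map_add_one_append hu hv]

theorem card_paths_one (n : ℕ) : #(paths 1 n) = catalan n := by
  induction n using Nat.strong_induction_on with
  | _ n ih =>
    cases n with
    | zero => simp [paths]
    | succ n =>
      rw [card_paths_one_succ, card_paths_two, catalan_succ']
      refine Finset.sum_congr rfl fun p hp => ?_
      rw [mem_antidiagonal] at hp
      rw [ih p.1 (by omega), ih p.2 (by omega)]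

end CatalanTree

theorem isTreeWord_iff_isChain {w : List ℕ} :
    isTreeWord w ↔ w ≠ [] ∧ IsChain CatalanTree.IsChild (1 :: w) := by
  have hsteps : (∀ j, j + 1 < w.length →
      2 ≤ w.getD (j + 1) 0 ∧ w.getD (j + 1) 0 ≤ w.getD j 0 + 1) ↔
      IsChain CatalanTree.IsChild w := by
    rw [isChain_iff_getElem]
    refine forall_congr' fun j => forall_congr' fun hj => ?_
    rw [getD_eq_getElem _ _ hj, getD_eq_getElem _ _ (Nat.lt_of_succ_lt hj), CatalanTree.IsChild]
  rw [isTreeWord, hsteps, isChain_cons]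
  cases w <;> simp [CatalanTree.isChild_one_iff]

/-- The number of length-`n` paths in the Catalan generating tree is the
Catalan number `C_n = binom(2n, n)/(n+1)`. -/
theorem stmt10 (n : Nat) (hn : 1 ≤ n) :
    Nat.card { w : List Nat // w.length = n ∧ isTreeWord w } =
      (2 * n).choose n / (n + 1) := by
  have e : { w : List ℕ // w.length = n ∧ isTreeWord w } ≃ CatalanTree.paths 1 n :=
    Equiv.subtypeEquivRight fun w => by
      rw [CatalanTree.mem_paths, isTreeWord_iff_isChain]
      exact ⟨fun ⟨hl, _, hc⟩ => ⟨hl, hc⟩, fun ⟨hl, hc⟩ => ⟨hl, ne_nil_of_length_pos (by omega), hc⟩⟩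
  rw [Nat.card_congr e, Nat.card_eq_finsetCard, CatalanTree.card_paths_one,
    catalan_eq_centralBinom_div, Nat.centralBinom_eq_two_mul_choose]
end

section
/- The map sending a word w_1...w_n (a path in the Catalan generating tree, i.e., w_1 = 2 and 2 ≤ w_{j+1} ≤ w_j + 1) to the binary string obtained by the inductive procedure—starting from '10' and, when appending digit w_{j+1} after w_j, replacing the final w_j − 1 zeros by (w_j − w_{j+1} + 1) zeros, then a 1, then (w_{j+1} − 1) zeros—produces a balanced binary string of length 2n encoding a Dyck path (every prefix has at least as many 1s as 0s, total number of 1s equals total number of 0s equals n). -/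
def zeros (m : Nat) : List Bool := List.replicate m false

/-- Appending digit `i` after a word ending in digit `k`: replace the final
`k - 1` zeros by `k + 1 - i` zeros, a one, and `i - 1` zeros. -/
def encStep (u : List Bool) (k i : Nat) : List Bool :=
  u.take (u.length - (k - 1)) ++ zeros (k + 1 - i) ++ [true] ++ zeros (i - 1)

def encAux : List Bool → Nat → List Nat → List Bool
  | u, _, [] => u
  | u, k, i :: rest => encAux (encStep u k i) i rest

/-- Encoding of a generating-tree word into a binary (Dyck) string,
starting from `10` for the word `2`. -/
def enc : List Nat → List Bool
  | [] => []
  | _ :: rest => encAux [true, false] 2 rest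

/-- A Dyck word: balanced, and every prefix has at least as many ones
(`true`) as zeros (`false`). -/
def isDyck (u : List Bool) : Prop :=
  u.count true = u.count false ∧
  ∀ m, (u.take m).count false ≤ (u.take m).count true

def CatalanStep (k i : ℕ) : Prop := 2 ≤ i ∧ i ≤ k + 1

def IsBallot (u : List Bool) : Prop := ∀ m, (u.take m).count false ≤ (u.take m).count true

theorem isChain_catalanStep_of_isTreeWord {w : List ℕ} (hw : isTreeWord w) :
    w.IsChain CatalanStep := by
  refine List.isChain_iff_getElem.mpr fun j hj => ?_
  have := hw.2 j hj
  rwa [List.getD_eq_getElem _ _ hj, List.getD_eq_getElem _ _ (by omega)] at this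

theorem count_take_append (u s : List Bool) (b : Bool) (m : ℕ) :
    ((u ++ s).take m).count b = (u.take m).count b + (s.take (m - u.length)).count b := by
  rw [List.take_append, List.count_append]

theorem IsBallot.append {u s : List Bool} {d : ℕ} (hu : IsBallot u)
    (hd : u.count true = u.count false + d)
    (hs : ∀ j, (s.take j).count false ≤ (s.take j).count true + d) : IsBallot (u ++ s) := by
  intro m
  rw [count_take_append, count_take_append]
  rcases le_or_gt m u.length with hm | hm
  · simpa [Nat.sub_eq_zero_of_le hm] using hu m
  · rw [List.take_of_length_le hm.le]
    linarith [hs (m - u.length)]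

theorem IsBallot.of_append {u s : List Bool} (h : IsBallot (u ++ s)) : IsBallot u := by
  intro m
  simpa [List.take_append_of_le_length, List.take_take, ← List.take_eq_take_min]
    using h (min m u.length)

theorem count_take_zeros_true_zeros_le {a b d : ℕ} (ha : a ≤ d) (hab : a + b ≤ d + 1)
    (j : ℕ) :
    ((zeros a ++ true :: zeros b).take j).count false
      ≤ ((zeros a ++ true :: zeros b).take j).count true + d := by
  simp only [zeros, count_take_append, List.length_replicate, List.take_replicate,
    List.count_replicate]
  cases j - a <;> simp [List.count_replicate] <;> omega

theorem encStep_append_zeros (v : List Bool) (k i : ℕ) :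
    encStep (v ++ zeros (k - 1)) k i = v ++ (zeros (k + 1 - i) ++ true :: zeros (i - 1)) := by
  simp [encStep, zeros]

theorem length_encStep_append_zeros {v : List Bool} {k i : ℕ} (hki : CatalanStep k i) :
    (encStep (v ++ zeros (k - 1)) k i).length = (v ++ zeros (k - 1)).length + 2 := by
  obtain ⟨hi, hik⟩ := hki
  rw [encStep_append_zeros]
  simp only [zeros, List.length_append, List.length_replicate, List.length_cons]
  omega

theorem isDyck_encStep_append_zeros {v : List Bool} {k i : ℕ} (hki : CatalanStep k i)
    (h : isDyck (v ++ zeros (k - 1))) : isDyck (encStep (v ++ zeros (k - 1)) k i) := by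
  obtain ⟨hi, hik⟩ := hki
  have hexcess : v.count true = v.count false + (k - 1) := by
    simpa [zeros, List.count_replicate, ← add_assoc] using h.1
  have hballot : IsBallot v := IsBallot.of_append h.2
  rw [encStep_append_zeros]
  refine ⟨?_, hballot.append hexcess (count_take_zeros_true_zeros_le (by omega) (by omega))⟩
  simp only [zeros, List.count_append, List.count_replicate_self, List.count_replicate, beq_true,
    Bool.false_eq_true, ↓reduceIte, List.count_cons_self, List.count_cons_of_ne, ne_eq,
    Bool.true_eq_false, not_false_eq_true, zero_add]
  omega

theorem length_encAux_and_isDyck (rest : List ℕ) :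
    ∀ (u : List Bool) (k : ℕ), (k :: rest).IsChain CatalanStep → zeros (k - 1) <:+ u →
      isDyck u →
        (encAux u k rest).length = u.length + 2 * rest.length ∧ isDyck (encAux u k rest) := by
  induction rest with
  | nil => intro u k _ _ hu; exact ⟨rfl, hu⟩
  | cons i rest ih =>
    rintro _ k hchain ⟨v, rfl⟩ hu
    obtain ⟨hki, hchain⟩ := List.isChain_cons_cons.mp hchain
    obtain ⟨hlen, hdyck⟩ := ih (encStep (v ++ zeros (k - 1)) k i) i hchain
      (List.suffix_append _ _) (isDyck_encStep_append_zeros hki hu)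
    refine ⟨?_, hdyck⟩
    rw [encAux, hlen, length_encStep_append_zeros hki, List.length_cons]
    ring

/-- The encoding of a generating-tree word of length `n` is a Dyck word of
length `2n`. -/
theorem stmt11 (w : List Nat) (hw : isTreeWord w) :
    (enc w).length = 2 * w.length ∧ isDyck (enc w) := by
  cases w with
  | nil => simp [isTreeWord] at hw
  | cons a rest =>
    obtain rfl : a = 2 := by simpa using hw.1
    have hbase : isDyck [true, false] := ⟨rfl, fun m => by rcases m with _ | _ | m <;> simp⟩
    obtain ⟨hlen, hdyck⟩ := length_encAux_and_isDyck rest [true, false] 2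
      (isChain_catalanStep_of_isTreeWord hw) (by simp [zeros]) hbase
    refine ⟨?_, hdyck⟩
    rw [enc, hlen]
    simp only [List.length_cons, List.length_nil]
    ring
end

section
/- The encoding from Catalan generating-tree words of length n to Dyck words of semilength n (via the inductive zero-replacement procedure) is a bijection. -/
/-!
Read a binary string as a lattice path (`true` up, `false` down). In the encoding of a
generating-tree word, the one written for a letter `k` ends at height `k - 1`, and the `k - 1`
zeros pending after it bring the path back to `0`; the admissible next letters `2 ≤ i ≤ k + 1`
are exactly the ways of going down by `k + 1 - i ≥ 0` steps and then up once. Hence the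
encoding produces Dyck paths, and it is inverted by recording, at each up-step, the height it
reaches plus one.
-/

open List

def IsDyckSuffix : Nat → List Bool → Prop
  | d, [] => d = 0
  | d, true :: u => IsDyckSuffix (d + 1) u
  | 0, false :: _ => False
  | d + 1, false :: u => IsDyckSuffix d u

theorem isDyckSuffix_iff {d : Nat} {u : List Bool} :
    IsDyckSuffix d u ↔ u.count false = u.count true + d ∧
      ∀ m, (u.take m).count false ≤ (u.take m).count true + d := by
  induction u generalizing d with
  | nil => simp [IsDyckSuffix, eq_comm]
  | cons b u ih =>
    have hprefix (e : Nat) :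
        (∀ m, ((b :: u).take m).count false ≤ ((b :: u).take m).count true + e) ↔
          ∀ m, ((b :: u).take (m + 1)).count false ≤ ((b :: u).take (m + 1)).count true + e :=
      ⟨fun h m => h (m + 1), fun h m => by cases m <;> simp_all⟩
    rw [hprefix]
    cases b with
    | true => simp [IsDyckSuffix, ih, Nat.add_assoc, Nat.add_comm 1 d]
    | false =>
      cases d with
      | zero => simpa [IsDyckSuffix] using fun _ => ⟨0, by simp⟩
      | succ d => simp [IsDyckSuffix, ih, ← Nat.add_assoc]

theorem isDyck_iff_isDyckSuffix_zero {u : List Bool} : isDyck u ↔ IsDyckSuffix 0 u := by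
  simp [isDyck, isDyckSuffix_iff, eq_comm]

theorem zeros_succ (m : Nat) : zeros (m + 1) = false :: zeros m := rfl

theorem IsDyckSuffix.zeros_append {d m : Nat} {u : List Bool} (h : IsDyckSuffix d u) :
    IsDyckSuffix (d + m) (zeros m ++ u) := by
  induction m with
  | zero => simpa [zeros] using h
  | succ m ih => simpa [zeros, replicate_succ, ← Nat.add_assoc, IsDyckSuffix] using ih

def TreeStep (k i : Nat) : Prop := 2 ≤ i ∧ i ≤ k + 1

theorem isTreeWord_iff {w : List Nat} :
    isTreeWord w ↔ ∃ l, w = 2 :: l ∧ (2 :: l).IsChain TreeStep := by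
  have hchain : isTreeWord w ↔ w.head? = some 2 ∧ w.IsChain TreeStep := by
    rw [isTreeWord, isChain_iff_getElem]
    refine and_congr_right fun _ => forall_congr' fun j => forall_congr' fun hj => ?_
    rw [getD_eq_getElem _ _ hj, getD_eq_getElem _ _ (by omega)]
    rfl
  rw [hchain]
  rcases w with _ | ⟨a, l⟩
  · simp
  · simp only [head?_cons, Option.some.injEq, cons.injEq]
    constructor
    · rintro ⟨rfl, hl⟩
      exact ⟨l, ⟨rfl, rfl⟩, hl⟩
    · rintro ⟨_, ⟨rfl, rfl⟩, hl⟩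
      exact ⟨rfl, hl⟩

/-- What the letters `l` written after a letter `k` contribute to the encoding, counting the
`k - 1` zeros pending after `k`. -/
def encFrom : Nat → List Nat → List Bool
  | k, [] => zeros (k - 1)
  | k, i :: l => zeros (k + 1 - i) ++ true :: encFrom i l

theorem encAux_append_zeros (v : List Bool) (k : Nat) (l : List Nat) :
    encAux (v ++ zeros (k - 1)) k l = v ++ encFrom k l := by
  induction l generalizing v k with
  | nil => rfl
  | cons i l ih =>
    have hstep : encStep (v ++ zeros (k - 1)) k i =
        v ++ zeros (k + 1 - i) ++ [true] ++ zeros (i - 1) := by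
      simp [encStep, zeros]
    rw [encAux, hstep, ih]
    simp [encFrom]

theorem enc_cons (a : Nat) (l : List Nat) : enc (a :: l) = true :: encFrom 2 l :=
  encAux_append_zeros [true] 2 l

theorem length_encFrom {k : Nat} {l : List Nat} (h : (k :: l).IsChain TreeStep) :
    (encFrom k l).length = 2 * l.length + (k - 1) := by
  induction l generalizing k with
  | nil => simp [encFrom, zeros]
  | cons i l ih =>
    obtain ⟨⟨hi, hik⟩, h⟩ := isChain_cons_cons.1 h
    simp [encFrom, zeros, ih h]
    omega

theorem isDyckSuffix_encFrom {k : Nat} {l : List Nat} (h : (k :: l).IsChain TreeStep) :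
    IsDyckSuffix (k - 1) (encFrom k l) := by
  induction l generalizing k with
  | nil => simpa [encFrom] using (show IsDyckSuffix 0 [] from rfl).zeros_append
  | cons i l ih =>
    obtain ⟨⟨hi, hik⟩, h⟩ := isChain_cons_cons.1 h
    have hup : IsDyckSuffix (i - 2) (true :: encFrom i l) := by
      simpa [IsDyckSuffix, show i - 2 + 1 = i - 1 by omega] using ih h
    simpa [encFrom, show i - 2 + (k + 1 - i) = k - 1 by omega]
      using hup.zeros_append (m := k + 1 - i)

theorem encFrom_succ {k : Nat} {l : List Nat} (hk : 1 ≤ k) (h : (k :: l).IsChain TreeStep) :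
    encFrom (k + 1) l = false :: encFrom k l := by
  rcases l with _ | ⟨i, l⟩
  · rw [encFrom, encFrom, show k + 1 - 1 = k - 1 + 1 by omega, zeros_succ]
  · have hi : i ≤ k + 1 := (isChain_cons_cons.1 h).1.2
    rw [encFrom, encFrom, show k + 1 + 1 - i = k + 1 - i + 1 by omega, zeros_succ, cons_append]

/-- `s` is the letter that the next `true` records: the current height plus two. -/
def decFrom : List Bool → Nat → List Nat
  | [], _ => []
  | false :: u, s => decFrom u (s - 1)
  | true :: u, s => s :: decFrom u (s + 1)

def dec : List Bool → List Nat
  | true :: u => 2 :: decFrom u 3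
  | _ => []

theorem decFrom_zeros_append (m : Nat) (u : List Bool) (s : Nat) :
    decFrom (zeros m ++ u) s = decFrom u (s - m) := by
  induction m generalizing s with
  | zero => rfl
  | succ m ih => rw [zeros_succ, cons_append, decFrom, ih, Nat.sub_right_comm, Nat.sub_sub]

theorem decFrom_encFrom {k : Nat} {l : List Nat} (h : (k :: l).IsChain TreeStep) :
    decFrom (encFrom k l) (k + 1) = l := by
  induction l generalizing k with
  | nil => simpa [encFrom, decFrom] using decFrom_zeros_append (k - 1) [] (k + 1)
  | cons i l ih =>
    obtain ⟨⟨hi, hik⟩, h⟩ := isChain_cons_cons.1 h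
    rw [encFrom, decFrom_zeros_append, show k + 1 - (k + 1 - i) = i by omega, decFrom, ih h]

theorem encFrom_decFrom {d : Nat} {u : List Bool} (h : IsDyckSuffix d u) :
    encFrom (d + 1) (decFrom u (d + 2)) = u ∧
      ((d + 1) :: decFrom u (d + 2)).IsChain TreeStep := by
  induction u generalizing d with
  | nil =>
    obtain rfl : d = 0 := h
    exact ⟨rfl, .singleton 1⟩
  | cons b u ih =>
    cases b with
    | true =>
      obtain ⟨henc, hchain⟩ := ih (d := d + 1) h
      refine ⟨?_, isChain_cons_cons.2 ⟨⟨by omega, le_rfl⟩, hchain⟩⟩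
      simp [decFrom, encFrom, zeros, henc]
    | false =>
      obtain _ | d := d
      · exact h.elim
      obtain ⟨henc, hchain⟩ := ih (d := d) h
      refine ⟨?_, hchain.imp_head fun ⟨h2, hle⟩ => ⟨h2, by omega⟩⟩
      rw [decFrom, show d + 1 + 2 - 1 = d + 2 by omega, encFrom_succ (by omega) hchain, henc]

theorem length_enc {w : List Nat} (hw : isTreeWord w) : (enc w).length = 2 * w.length := by
  obtain ⟨l, rfl, hl⟩ := isTreeWord_iff.1 hw
  simp [enc_cons, length_encFrom hl]
  omega

theorem isDyck_enc {w : List Nat} (hw : isTreeWord w) : isDyck (enc w) := by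
  obtain ⟨l, rfl, hl⟩ := isTreeWord_iff.1 hw
  rw [isDyck_iff_isDyckSuffix_zero, enc_cons]
  exact isDyckSuffix_encFrom hl

theorem dec_enc {w : List Nat} (hw : isTreeWord w) : dec (enc w) = w := by
  obtain ⟨l, rfl, hl⟩ := isTreeWord_iff.1 hw
  rw [enc_cons, dec, decFrom_encFrom hl]

theorem enc_dec {u : List Bool} (hu : isDyck u) (hne : u ≠ []) :
    enc (dec u) = u ∧ isTreeWord (dec u) := by
  rw [isDyck_iff_isDyckSuffix_zero] at hu
  rcases u with _ | ⟨_ | _, u⟩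
  · exact absurd rfl hne
  · exact hu.elim
  · obtain ⟨henc, hchain⟩ := encFrom_decFrom (d := 1) hu
    exact ⟨by rw [dec, enc_cons, henc], isTreeWord_iff.2 ⟨_, rfl, hchain⟩⟩

/-- The encoding is a bijection from generating-tree words of length `n`
onto Dyck words of semilength `n`. -/
theorem stmt12 (n : Nat) (hn : 1 ≤ n) :
    Set.BijOn enc { w : List Nat | w.length = n ∧ isTreeWord w }
      { u : List Bool | u.length = 2 * n ∧ isDyck u } := by
  have hne {u : List Bool} (hu : u.length = 2 * n) : u ≠ [] := ne_nil_of_length_pos (by omega)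
  refine Set.InvOn.bijOn (f' := dec)
    ⟨fun w hw => dec_enc hw.2, fun u hu => (enc_dec hu.2 (hne hu.1)).1⟩ ?_ ?_
  · rintro w ⟨rfl, hw⟩
    exact ⟨length_enc hw, isDyck_enc hw⟩
  · rintro u ⟨hlen, hu⟩
    obtain ⟨henc, hdec⟩ := enc_dec hu (hne hlen)
    have hlen' := length_enc hdec
    rw [henc] at hlen'
    exact ⟨by omega, hdec⟩
end

section
/- In the list of Dyck words of semilength n obtained by encoding the Gray code list L_n word by word, any two consecutive Dyck words have Hamming distance exactly 2. -/
/-- Hamming distance: number of positions where two words differ. -/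
def hamming {α : Type*} [DecidableEq α] (v w : List α) : Nat :=
  ((v.zip w).filter (fun p => decide (p.1 ≠ p.2))).length

/-!
The encoding of a word `2 d₁ … dₘ` is the concatenation of the blocks
`1 0^(3 - d₁)`, `1 0^(d₁ + 1 - d₂)`, …, `1 0^(dₘ - 1)`, so a digit `x` only enters the two
zero runs on either side of its own `1`, and with opposite signs. Two words that differ in a
single digit, both obeying the succession rule around it, therefore have encodings that differ
by moving one `1` inside a run of zeros, which is Hamming distance 2.

Consecutive words of `L_n` differ in this way, by induction on `n`: the children of a word
ending in `k` are listed by `sC k j`, a repetition-free list of digits in `[2, k + 1]` that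
starts at `j` and ends at `5 - j` for `j ∈ {2, 3}`, and the children of the next word are
listed starting from the digit the previous list ended with, so across that boundary only the
digit in which the two parents differ changes.
-/

section Hamming

variable {α : Type*} [DecidableEq α]

lemma hamming_append {u u' v v' : List α} (h : u.length = u'.length) :
    hamming (u ++ v) (u' ++ v') = hamming u u' + hamming v v' := by
  rw [hamming, List.zip_append h, List.filter_append, List.length_append]; rfl

@[simp]
lemma hamming_self (u : List α) : hamming u u = 0 := by
  induction u with
  | nil => rfl
  | cons a u ih => simpa [hamming] using ih

lemma hamming_cons (a b : α) (u v : List α) :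
    hamming (a :: u) (b :: v) = hamming u v + if a = b then 0 else 1 := by
  by_cases h : a = b <;> simp [hamming, h]

lemma hamming_comm (u v : List α) : hamming u v = hamming v u := by
  rw [hamming, hamming, ← List.zip_swap, List.filter_map, List.length_map]
  simp [Function.comp_def, eq_comm]

end Hamming

@[simp]
lemma length_zeros (m : ℕ) : (zeros m).length = m :=
  List.length_replicate

lemma zeros_add_one_add (m n : ℕ) : zeros (m + 1 + n) = zeros m ++ false :: zeros n := by
  rw [zeros, List.replicate_add, List.replicate_succ']; simp [zeros]

lemma hamming_zeros_true_zeros {a b a' b' : ℕ} (hsum : a + b = a' + b') (hne : a ≠ a') :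
    hamming (zeros a ++ true :: zeros b) (zeros a' ++ true :: zeros b') = 2 := by
  wlog hlt : a < a' generalizing a b a' b'
  · rw [hamming_comm]; exact this hsum.symm hne.symm (by omega)
  obtain ⟨t, rfl⟩ : ∃ t, a' = a + 1 + t := ⟨a' - a - 1, by omega⟩
  obtain rfl : b = t + 1 + b' := by omega
  simp [zeros_add_one_add, hamming_append, hamming_cons]

def blocks : ℕ → List ℕ → List Bool
  | k, [] => true :: zeros (k - 1)
  | k, d :: l => true :: zeros (k + 1 - d) ++ blocks d l

lemma encStep_append_true_zeros (W : List Bool) (k d : ℕ) :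
    encStep (W ++ true :: zeros (k - 1)) k d =
      W ++ true :: zeros (k + 1 - d) ++ true :: zeros (d - 1) := by
  have hkeep : (W ++ true :: zeros (k - 1)).length - (k - 1) = W.length + 1 := by
    simp only [List.length_append, List.length_cons, length_zeros]
    omega
  rw [encStep, hkeep]
  simp [List.take_append, zeros]

lemma encAux_append_true_zeros (l : List ℕ) (k : ℕ) (W : List Bool) :
    encAux (W ++ true :: zeros (k - 1)) k l = W ++ blocks k l := by
  induction l generalizing k W with
  | nil => rfl
  | cons d l ih =>
    rw [encAux, encStep_append_true_zeros, ih, blocks, List.append_assoc]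

lemma enc_cons_s16 (h : ℕ) (r : List ℕ) : enc (h :: r) = blocks 2 r :=
  encAux_append_true_zeros r 2 []

lemma hamming_blocks_append_cons (a c : List ℕ) (k x y : ℕ) (hne : x ≠ y)
    (hx : x ≤ a.getLastD k + 1) (hy : y ≤ a.getLastD k + 1)
    (hcx : c.headD 2 ≤ x + 1) (hcy : c.headD 2 ≤ y + 1) :
    hamming (blocks k (a ++ x :: c)) (blocks k (a ++ y :: c)) = 2 := by
  induction a generalizing k with
  | nil =>
    simp only [List.getLastD_nil] at hx hy
    cases c with
    | nil =>
      simp only [List.headD_nil] at hcx hcy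
      simp only [List.nil_append, blocks, List.cons_append, hamming_cons]
      simpa using hamming_zeros_true_zeros (by omega) (by omega)
    | cons d c =>
      simp only [List.headD_cons] at hcx hcy
      simp only [List.nil_append, blocks, List.cons_append, hamming_cons]
      have hlen : (zeros (k + 1 - x) ++ true :: zeros (x + 1 - d)).length =
          (zeros (k + 1 - y) ++ true :: zeros (y + 1 - d)).length := by
        simp only [List.length_append, List.length_cons, length_zeros]; omega
      rw [← List.cons_append, ← List.cons_append, ← List.append_assoc, ← List.append_assoc,
        hamming_append hlen, hamming_self, hamming_zeros_true_zeros (by omega) (by omega)]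
      rfl
  | cons e a ih =>
    simp only [List.getLastD_cons] at hx hy
    rw [List.cons_append, List.cons_append, blocks, blocks, hamming_append rfl, hamming_self,
      ih e hx hy]

/-- A missing next digit counts as `2`: the last block of an encoding has
`d - 1 = d + 1 - 2` zeros. -/
def GrayStep (w w' : List ℕ) : Prop :=
  ∃ a x y c, w = 2 :: (a ++ x :: c) ∧ w' = 2 :: (a ++ y :: c) ∧ x ≠ y ∧
    x ≤ a.getLastD 2 + 1 ∧ y ≤ a.getLastD 2 + 1 ∧
    c.headD 2 ≤ x + 1 ∧ c.headD 2 ≤ y + 1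

lemma hamming_enc_of_grayStep {w w' : List ℕ} (h : GrayStep w w') :
    hamming (enc w) (enc w') = 2 := by
  obtain ⟨a, x, y, c, rfl, rfl, hne, hx, hy, hcx, hcy⟩ := h
  rw [enc_cons_s16, enc_cons_s16]
  exact hamming_blocks_append_cons a c 2 x y hne hx hy hcx hcy

def Admissible (w : List ℕ) : Prop := (∃ t, w = 2 :: t) ∧ 2 ≤ lastD w

@[simp]
lemma lastD_concat (w : List ℕ) (d : ℕ) : lastD (w ++ [d]) = d := by
  simp [lastD]

lemma lastD_two_cons (t : List ℕ) : lastD (2 :: t) = t.getLastD 2 :=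
  List.getLastD_cons

lemma Admissible.concat {w : List ℕ} (hw : Admissible w) {d : ℕ} (hd : 2 ≤ d) :
    Admissible (w ++ [d]) := by
  obtain ⟨⟨t, rfl⟩, _⟩ := hw
  refine ⟨⟨t ++ [d], rfl⟩, ?_⟩
  rwa [lastD_concat]

lemma grayStep_concat_of_ne {w : List ℕ} (hw : Admissible w) {d d' : ℕ} (hne : d ≠ d')
    (hd : 2 ≤ d ∧ d ≤ lastD w + 1) (hd' : 2 ≤ d' ∧ d' ≤ lastD w + 1) :
    GrayStep (w ++ [d]) (w ++ [d']) := by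
  obtain ⟨⟨t, rfl⟩, _⟩ := hw
  rw [lastD_two_cons] at hd hd'
  exact ⟨t, d, d', [], rfl, rfl, hne, hd.2, hd'.2, Nat.le_succ_of_le hd.1,
    Nat.le_succ_of_le hd'.1⟩

lemma GrayStep.concat {w w' : List ℕ} (h : GrayStep w w') {d : ℕ}
    (hd : d ≤ lastD w + 1) (hd' : d ≤ lastD w' + 1) :
    GrayStep (w ++ [d]) (w' ++ [d]) := by
  obtain ⟨a, x, y, c, rfl, rfl, hne, hx, hy, hcx, hcy⟩ := h
  refine ⟨a, x, y, c ++ [d], by simp, by simp, hne, hx, hy, ?_, ?_⟩ <;>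
  cases c <;> simp_all [lastD_two_cons]

lemma sC_two {k : ℕ} (hk : 2 ≤ k) :
    sC k 2 = 2 :: (List.range (k - 2)).map (fun t => k + 1 - t) ++ [3] := by
  obtain ⟨m, rfl⟩ : ∃ m, k = m + 2 := ⟨k - 2, by omega⟩
  simp [sC, List.range_succ, show m + 2 + 1 - m = 3 by omega]

lemma sC_three (k : ℕ) : sC k 3 = (List.range (k - 1)).map (3 + ·) ++ [2] := by
  simp [sC, show k + 2 - 3 = k - 1 by omega]

lemma head?_sC {k j : ℕ} (hk : 2 ≤ k) (hj : j = 2 ∨ j = 3) : (sC k j).head? = some j := by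
  obtain ⟨m, rfl⟩ : ∃ m, k = m + 2 := ⟨k - 2, by omega⟩
  rcases hj with rfl | rfl
  · simp [sC]
  · simp [sC_three, List.range_succ_eq_map]

lemma getLast?_sC {k j : ℕ} (hk : 2 ≤ k) (hj : j = 2 ∨ j = 3) :
    (sC k j).getLast? = some (5 - j) := by
  rcases hj with rfl | rfl
  · rw [sC_two hk, List.getLast?_concat]
  · rw [sC_three, List.getLast?_concat]

lemma mem_sC {k j d : ℕ} (hk : 2 ≤ k) (hj : j = 2 ∨ j = 3) (hd : d ∈ sC k j) :
    2 ≤ d ∧ d ≤ k + 1 := by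
  rcases hj with rfl | rfl
  · simp only [sC, if_true, List.mem_cons, List.mem_map, List.mem_range] at hd
    obtain rfl | ⟨t, ht, rfl⟩ := hd <;> omega
  · simp only [sC_three, List.mem_append, List.mem_map, List.mem_range,
      List.mem_singleton] at hd
    obtain ⟨t, ht, rfl⟩ | rfl := hd <;> omega

lemma nodup_sC {k j : ℕ} (hj : j = 2 ∨ j = 3) : (sC k j).Nodup := by
  rcases hj with rfl | rfl
  · simp only [sC, if_true, List.nodup_cons, List.mem_map, List.mem_range]
    refine ⟨by omega, List.nodup_range.map_on fun s hs t ht hst => ?_⟩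
    simp only [List.mem_range] at hs ht
    omega
  · rw [sC_three, List.nodup_append]
    refine ⟨List.nodup_range.map (add_right_injective 3), by simp, ?_⟩
    simp only [List.mem_map, List.mem_singleton]
    rintro _ ⟨t, -, rfl⟩ _ rfl
    omega

lemma graySubsAux_cons {j : ℕ} (hj : j = 2 ∨ j = 3) {w : List ℕ} (hw : Admissible w)
    (ws : List (List ℕ)) :
    graySubsAux j (w :: ws) =
      (sC (lastD w) j).map (fun d => w ++ [d]) :: graySubsAux (5 - j) ws := by
  have hlast : ((sC (lastD w) j).map (fun d => w ++ [d])).getLastD [] = w ++ [5 - j] := by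
    rw [List.getLastD_eq_getLast?, List.getLast?_map, getLast?_sC hw.2 hj]
    rfl
  rw [graySubsAux, hlast, lastD_concat]

lemma admissible_of_mem_flatten_graySubsAux {L : List (List ℕ)} {j : ℕ} (hj : j = 2 ∨ j = 3)
    (hL : ∀ w ∈ L, Admissible w) : ∀ v ∈ (graySubsAux j L).flatten, Admissible v := by
  induction L generalizing j with
  | nil => simp [graySubsAux]
  | cons w ws ih =>
    have hw := hL w List.mem_cons_self
    rw [graySubsAux_cons hj hw, List.flatten_cons]
    intro v hv
    rcases List.mem_append.mp hv with hv | hv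
    · obtain ⟨d, hd, rfl⟩ := List.mem_map.mp hv
      exact hw.concat (mem_sC hw.2 hj hd).1
    · exact ih (by omega) (fun u hu => hL u (List.mem_cons_of_mem w hu)) v hv

lemma isChain_grayStep_flatten_graySubsAux {L : List (List ℕ)} {j : ℕ} (hj : j = 2 ∨ j = 3)
    (hL : ∀ w ∈ L, Admissible w) (hchain : L.IsChain GrayStep) :
    (graySubsAux j L).flatten.IsChain GrayStep := by
  induction L generalizing j with
  | nil => simp [graySubsAux]
  | cons w ws ih =>
    have hw := hL w List.mem_cons_self
    rw [graySubsAux_cons hj hw, List.flatten_cons, List.isChain_append]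
    refine ⟨?_, ih (by omega) (fun u hu => hL u (List.mem_cons_of_mem w hu)) hchain.tail, ?_⟩
    · rw [List.isChain_map]
      exact (nodup_sC hj).isChain.imp_of_mem_imp fun _ _ hd hd' hne =>
        grayStep_concat_of_ne hw hne (mem_sC hw.2 hj hd) (mem_sC hw.2 hj hd')
    · cases ws with
      | nil => simp [graySubsAux]
      | cons w' ws =>
        have hw' := hL w' (List.mem_cons_of_mem w List.mem_cons_self)
        rw [graySubsAux_cons (by omega) hw', List.flatten_cons, List.head?_append,
          List.head?_map, head?_sC hw'.2 (by omega), List.getLast?_map, getLast?_sC hw.2 hj]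
        simp only [Option.map_some, Option.some_or, Option.mem_def, Option.some.injEq]
        rintro _ rfl _ rfl
        have hk := hw.2
        have hk' := hw'.2
        exact (List.isChain_cons_cons.mp hchain).1.concat (by omega) (by omega)

lemma admissible_of_mem_grayL : ∀ n, ∀ w ∈ grayL n, Admissible w
  | 0 => by simp [grayL]
  | 1 => by simp [grayL, Admissible, lastD]
  | n + 2 => admissible_of_mem_flatten_graySubsAux (Or.inl rfl) (admissible_of_mem_grayL (n + 1))

lemma isChain_grayStep_grayL : ∀ n, (grayL n).IsChain GrayStep
  | 0 => by simp [grayL]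
  | 1 => by simp [grayL]
  | n + 2 => isChain_grayStep_flatten_graySubsAux (Or.inl rfl)
      (admissible_of_mem_grayL (n + 1)) (isChain_grayStep_grayL (n + 1))

theorem stmt16_general (n : Nat) (i : Nat) (hi : i + 1 < (grayL n).length) :
    hamming (enc ((grayL n).getD i [])) (enc ((grayL n).getD (i + 1) [])) = 2 := by
  rw [List.getD_eq_getElem _ _ (by omega), List.getD_eq_getElem _ _ hi]
  exact hamming_enc_of_grayStep (List.isChain_iff_getElem.mp (isChain_grayStep_grayL n) i hi)

/-- Encoding the Gray code list `L_n` word by word gives a list of Dyck words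
in which any two consecutive ones have Hamming distance exactly 2. -/
theorem stmt16 (n : Nat) (hn : 1 ≤ n) (i : Nat) (hi : i + 1 < (grayL n).length) :
    hamming (enc ((grayL n).getD i [])) (enc ((grayL n).getD (i + 1) [])) = 2 :=
  stmt16_general n i hi
end
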